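/- Let S ⊆ (0, +∞) be a set satisfying the descending chain condition and let K ∈ ℝ. Then the set { x ∈ S : there exist k ∈ ℤ_{>0} and s₁, …, s_k ∈ S (repetitions allowed) with s₁ + ⋯ + s_k = K and x = sⱼ for some j } of elements of S that appear as a summand in some finite representation of K is a finite set. -/

import Mathlib

/-!
Every summand `x` of a representation `s₁ + ⋯ + sₖ = K` pairs with the sum of the remaining
terms, an element of the additive submonoid generated by `S` that adds to `x` to give `K`. A DCC subset of `ℝ` is
partially well-ordered, and so is the submonoid it generates when its elements are nonnegative;
hence only finitely many pairs of elements of these two sets add up to `K`.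
-/

/-- A set `S ⊆ ℝ` satisfies the descending chain condition (DCC) if there is no
infinite strictly decreasing sequence of elements of `S`. -/
def DCC (S : Set ℝ) : Prop :=
  ¬ ∃ f : ℕ → ℝ, (∀ i, f i ∈ S) ∧ StrictAnti f

open Finset

theorem DCC.isPWO {S : Set ℝ} (h : DCC S) : S.IsPWO :=
  (Set.isWF_iff_no_descending_seq.2 fun f hf hmem => h ⟨f, hmem, hf⟩).isPWO

theorem mem_image_fst_antidiagonal_closure {α : Type*} [AddCommMonoid α] {S : Set α} {K : α}
    {k : ℕ} {f : Fin k → α} (hf : ∀ j, f j ∈ S) (hsum : ∑ j, f j = K) (j : Fin k) :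
    f j ∈ Prod.fst '' S.antidiagonal (AddSubmonoid.closure S) K :=
  ⟨(f j, ∑ i ∈ univ.erase j, f i),
    ⟨hf j, sum_mem fun i _ => AddSubmonoid.subset_closure (hf i),
      (add_sum_erase _ f (mem_univ j)).trans hsum⟩, rfl⟩

theorem Set.IsPWO.finite_summands {α : Type*} [AddCommMonoid α] [PartialOrder α]
    [IsOrderedCancelAddMonoid α] {S : Set α} (hS : S.IsPWO) (hnonneg : ∀ x ∈ S, 0 ≤ x) (K : α) :
    { x : α | x ∈ S ∧ ∃ k : ℕ, ∃ f : Fin k → α,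
        (∀ j, f j ∈ S) ∧ (∑ j, f j) = K ∧ ∃ j, x = f j }.Finite := by
  refine ((Set.AddAntidiagonal.finite_of_isPWO hS (hS.addSubmonoid_closure hnonneg) K).image
    Prod.fst).subset ?_
  rintro x ⟨-, k, f, hf, hsum, j, rfl⟩
  exact mem_image_fst_antidiagonal_closure hf hsum j

theorem finiteness_of_summands (S : Set ℝ) (hS : S ⊆ Set.Ioi 0) (hDCC : DCC S)
    (K : ℝ) :
    { x : ℝ | x ∈ S ∧ ∃ k : ℕ, 0 < k ∧ ∃ f : Fin k → ℝ,
        (∀ j, f j ∈ S) ∧ (∑ j, f j) = K ∧ ∃ j, x = f j }.Finite :=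
  (hDCC.isPWO.finite_summands (fun _ hx => (hS hx).le) K).subset
    fun _ ⟨hxS, k, _, f, hf⟩ => ⟨hxS, k, f, hf⟩
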